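/- Let (G,σ) be a connected connection graph and let H⊊V be a nonempty proper subset. Then for any boundary data φ:∂H→ℝ^{d×d}, the Dirichlet problem (u|_{∂H}=φ, (L^σ u)(i)=0_{d×d} for all i∈H, where u:V→ℝ^{d×d}, taking u=0 outside H̄) has at most one solution. In particular, for any single vertex j∈V, the principal block submatrix L_{j^c,j^c} of L^σ obtained by deleting the block row and column of j is positive definite. -/

import Mathlib

noncomputable section

open Matrix

/-- The simple graph underlying a weight matrix: vertices are adjacent iff the
connecting weight is positive. -/
def graphOf {n : ℕ} (W : Matrix (Fin n) (Fin n) ℝ) : SimpleGraph (Fin n) :=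
  SimpleGraph.fromRel (fun i j => 0 < W i j)

/-- `W` is a valid edge-weight matrix: symmetric, zero diagonal, nonnegative entries. -/
def IsWeight {n : ℕ} (W : Matrix (Fin n) (Fin n) ℝ) : Prop :=
  W.IsSymm ∧ (∀ i, W i i = 0) ∧ (∀ i j, 0 ≤ W i j)

/-- `σ` is a signature on the graph of `W`: it assigns an orthogonal matrix to every
oriented edge, compatibly with the orientation reversal. -/
def IsSignature {n : ℕ} {ι : Type} [Fintype ι] [DecidableEq ι]
    (W : Matrix (Fin n) (Fin n) ℝ) (σ : Fin n → Fin n → Matrix ι ι ℝ) : Prop :=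
  (∀ i j, 0 < W i j → (σ i j)ᵀ * σ i j = 1) ∧
  (∀ i j, 0 < W i j → σ j i = (σ i j)ᵀ)

/-- The connection Laplacian of `(W, σ)`: the `(i,i)` block is `deg(i) • I`, the `(i,j)`
block is `-w_{ij} σ_{ij}`. -/
def connLap {n : ℕ} {ι : Type} [Fintype ι] [DecidableEq ι]
    (W : Matrix (Fin n) (Fin n) ℝ) (σ : Fin n → Fin n → Matrix ι ι ℝ) :
    Matrix (Fin n × ι) (Fin n × ι) ℝ :=
  Matrix.of fun p q =>
    (if p = q then ∑ k, W p.1 k else 0) - W p.1 q.1 * σ p.1 q.1 p.2 q.2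

/-- The action of the connection Laplacian on matrix-valued functions on vertices:
`(L f)(i) = Σ_j w_{ij} (f i - σ_{ij} f j)`. -/
def lapApply {n : ℕ} {ι : Type} [Fintype ι] [DecidableEq ι]
    (W : Matrix (Fin n) (Fin n) ℝ) (σ : Fin n → Fin n → Matrix ι ι ℝ)
    (f : Fin n → Matrix ι ι ℝ) (i : Fin n) : Matrix ι ι ℝ :=
  ∑ j, W i j • (f i - σ i j * f j)

/-- The vertex boundary of `H`: vertices outside `H` adjacent to some vertex of `H`. -/
def vertexBoundary {n : ℕ} (W : Matrix (Fin n) (Fin n) ℝ) (H : Set (Fin n)) :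
    Set (Fin n) :=
  {j | j ∉ H ∧ ∃ i ∈ H, (graphOf W).Adj i j}

/-- The principal block submatrix of the connection Laplacian obtained by deleting the
block row and block column of the vertex `j`. -/
def minorC {n : ℕ} {ι : Type} [Fintype ι] [DecidableEq ι]
    (W : Matrix (Fin n) (Fin n) ℝ) (σ : Fin n → Fin n → Matrix ι ι ℝ) (j : Fin n) :
    Matrix ({k : Fin n // k ≠ j} × ι) ({k : Fin n // k ≠ j} × ι) ℝ :=
  (connLap W σ).submatrix (fun p => ((p.1 : Fin n), p.2)) (fun p => ((p.1 : Fin n), p.2))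

/-! ### Auxiliary lemmas -/

private lemma sum_split {n : ℕ} {M : Type*} [AddCommMonoid M] (j : Fin n) (h : Fin n → M) :
    ∑ k, h k = h j + ∑ k : {k : Fin n // k ≠ j}, h (k : Fin n) := by
  classical
  rw [← Finset.add_sum_erase Finset.univ h (Finset.mem_univ j)]
  congr 1
  exact Finset.sum_subtype (p := fun k => k ≠ j) (Finset.univ.erase j)
    (fun x => by simp [Finset.mem_erase]) (fun k => h k)

private lemma connLap_mulVec {n d : ℕ} (W : Matrix (Fin n) (Fin n) ℝ)
    (σ : Fin n → Fin n → Matrix (Fin d) (Fin d) ℝ) (g : Fin n → Fin d → ℝ)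
    (i : Fin n) (a : Fin d) :
    (connLap W σ *ᵥ fun p => g p.1 p.2) (i, a)
      = ∑ j, W i j * (g i a - (σ i j *ᵥ g j) a) := by
  rw [Matrix.mulVec, dotProduct]
  simp only [connLap, Matrix.of_apply, sub_mul, ite_mul, zero_mul]
  rw [Finset.sum_sub_distrib]
  have h1 : (∑ q : Fin n × Fin d,
      if (i, a) = q then (∑ k, W i k) * g q.1 q.2 else 0) = (∑ k, W i k) * g i a := by
    rw [Finset.sum_ite_eq]
    simp
  have h2 : (∑ q : Fin n × Fin d, W i q.1 * σ i q.1 a q.2 * g q.1 q.2)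
      = ∑ j, W i j * (σ i j *ᵥ g j) a := by
    rw [Fintype.sum_prod_type]
    refine Finset.sum_congr rfl fun j _ => ?_
    rw [Matrix.mulVec, dotProduct, Finset.mul_sum]
    exact Finset.sum_congr rfl fun b _ => by ring
  rw [h1, h2, Finset.sum_mul, ← Finset.sum_sub_distrib]
  exact Finset.sum_congr rfl fun j _ => by ring

private lemma mulVec_norm {d : ℕ} (A : Matrix (Fin d) (Fin d) ℝ) (h : Aᵀ * A = 1)
    (w : Fin d → ℝ) : (A *ᵥ w) ⬝ᵥ (A *ᵥ w) = w ⬝ᵥ w := by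
  rw [dotProduct_mulVec, ← Matrix.mulVec_transpose, Matrix.mulVec_mulVec, h,
    Matrix.one_mulVec]

private lemma energy_eq {n d : ℕ} (W : Matrix (Fin n) (Fin n) ℝ) (hW : IsWeight W)
    (σ : Fin n → Fin n → Matrix (Fin d) (Fin d) ℝ) (hσ : IsSignature W σ)
    (g : Fin n → Fin d → ℝ) :
    2 * ((fun p : Fin n × Fin d => g p.1 p.2) ⬝ᵥ (connLap W σ *ᵥ fun p => g p.1 p.2)) =
      ∑ i, ∑ j, W i j * (∑ a, (g i a - (σ i j *ᵥ g j) a) ^ 2) := by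
  have hL : ((fun p : Fin n × Fin d => g p.1 p.2) ⬝ᵥ (connLap W σ *ᵥ fun p => g p.1 p.2))
      = ∑ i, ∑ j, W i j * ((∑ a, g i a * g i a) - ∑ a, g i a * (σ i j *ᵥ g j) a) := by
    rw [dotProduct, Fintype.sum_prod_type]
    refine Finset.sum_congr rfl fun i _ => ?_
    calc ∑ a, g i a * (connLap W σ *ᵥ fun p => g p.1 p.2) (i, a)
        = ∑ a, ∑ j, W i j * (g i a * (g i a - (σ i j *ᵥ g j) a)) := by
          refine Finset.sum_congr rfl fun a _ => ?_
          rw [connLap_mulVec, Finset.mul_sum]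
          exact Finset.sum_congr rfl fun j _ => by ring
      _ = ∑ j, W i j * ((∑ a, g i a * g i a) - ∑ a, g i a * (σ i j *ᵥ g j) a) := by
          rw [Finset.sum_comm]
          refine Finset.sum_congr rfl fun j _ => ?_
          rw [← Finset.mul_sum]
          congr 1
          rw [← Finset.sum_sub_distrib]
          exact Finset.sum_congr rfl fun a _ => by ring
  have hR : ∀ i j, W i j * (∑ a, (g i a - (σ i j *ᵥ g j) a) ^ 2)
      = W i j * (∑ a, g i a * g i a) + W i j * (∑ a, g j a * g j a)
        - 2 * (W i j * ∑ a, g i a * (σ i j *ᵥ g j) a) := by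
    intro i j
    have hsq : ∑ a, (g i a - (σ i j *ᵥ g j) a) ^ 2
        = (∑ a, g i a * g i a) + (∑ a, (σ i j *ᵥ g j) a * (σ i j *ᵥ g j) a)
          - 2 * ∑ a, g i a * (σ i j *ᵥ g j) a := by
      rw [← Finset.sum_add_distrib, Finset.mul_sum, ← Finset.sum_sub_distrib]
      exact Finset.sum_congr rfl fun a _ => by ring
    rcases (hW.2.2 i j).eq_or_lt with h | h
    · rw [← h]; ring
    · have horth : ∑ a, (σ i j *ᵥ g j) a * (σ i j *ᵥ g j) a = ∑ a, g j a * g j a := by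
        have := mulVec_norm (σ i j) (hσ.1 i j h) (g j)
        simpa [dotProduct] using this
      rw [hsq, horth]; ring
  have hswap : ∑ i, ∑ j, W i j * (∑ a, g j a * g j a)
      = ∑ i, ∑ j, W i j * (∑ a, g i a * g i a) := by
    rw [Finset.sum_comm]
    exact Finset.sum_congr rfl fun i _ => Finset.sum_congr rfl fun j _ => by
      rw [hW.1.apply]
  have hcorr : ∑ i, ∑ j, (W i j * (∑ a, g j a * g j a) - W i j * (∑ a, g i a * g i a)) = 0 := by
    simp only [Finset.sum_sub_distrib]
    rw [hswap, sub_self]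
  calc 2 * ((fun p : Fin n × Fin d => g p.1 p.2) ⬝ᵥ (connLap W σ *ᵥ fun p => g p.1 p.2))
      = 2 * ∑ i, ∑ j, W i j * ((∑ a, g i a * g i a) - ∑ a, g i a * (σ i j *ᵥ g j) a) := by
        rw [hL]
    _ = (∑ i, ∑ j, 2 * (W i j * ((∑ a, g i a * g i a) - ∑ a, g i a * (σ i j *ᵥ g j) a)))
          + ∑ i, ∑ j, (W i j * (∑ a, g j a * g j a) - W i j * (∑ a, g i a * g i a)) := by
        rw [hcorr, add_zero, Finset.mul_sum]
        exact Finset.sum_congr rfl fun i _ => by rw [Finset.mul_sum]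
    _ = ∑ i, ∑ j, W i j * (∑ a, (g i a - (σ i j *ᵥ g j) a) ^ 2) := by
        rw [← Finset.sum_add_distrib]
        refine Finset.sum_congr rfl fun i _ => ?_
        rw [← Finset.sum_add_distrib]
        refine Finset.sum_congr rfl fun j _ => ?_
        rw [hR i j]
        ring

private lemma quad_nonneg {n d : ℕ} (W : Matrix (Fin n) (Fin n) ℝ) (hW : IsWeight W)
    (σ : Fin n → Fin n → Matrix (Fin d) (Fin d) ℝ) (hσ : IsSignature W σ)
    (g : Fin n → Fin d → ℝ) :
    0 ≤ (fun p : Fin n × Fin d => g p.1 p.2) ⬝ᵥ (connLap W σ *ᵥ fun p => g p.1 p.2) := by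
  have h := energy_eq W hW σ hσ g
  have hnn : 0 ≤ ∑ i, ∑ j, W i j * (∑ a, (g i a - (σ i j *ᵥ g j) a) ^ 2) :=
    Finset.sum_nonneg fun i _ => Finset.sum_nonneg fun j _ =>
      mul_nonneg (hW.2.2 i j) (Finset.sum_nonneg fun a _ => sq_nonneg _)
  linarith

private lemma propagate {n d : ℕ} (W : Matrix (Fin n) (Fin n) ℝ) (hW : IsWeight W)
    (σ : Fin n → Fin n → Matrix (Fin d) (Fin d) ℝ) (hσ : IsSignature W σ)
    (g : Fin n → Fin d → ℝ)
    (hg : ∀ i j, 0 < W i j → g i = σ i j *ᵥ g j) :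
    ∀ {x y : Fin n}, (graphOf W).Walk x y → g x = 0 → g y = 0 := by
  intro x y p
  induction p with
  | nil => exact fun h => h
  | @cons u v w h q ih =>
    intro hu
    apply ih
    have hpos : 0 < W u v := by
      rw [graphOf, SimpleGraph.fromRel_adj] at h
      rcases h.2 with h' | h'
      · exact h'
      · rw [← hW.1.apply]; exact h'
    have h1 : σ u v *ᵥ g v = 0 := by rw [← hg u v hpos]; exact hu
    have : g v = ((σ u v)ᵀ * σ u v) *ᵥ g v := by rw [hσ.1 u v hpos, Matrix.one_mulVec]
    rw [this, ← Matrix.mulVec_mulVec, h1, Matrix.mulVec_zero]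

private lemma key {n d : ℕ} (W : Matrix (Fin n) (Fin n) ℝ) (hW : IsWeight W)
    (hconn : (graphOf W).Connected)
    (σ : Fin n → Fin n → Matrix (Fin d) (Fin d) ℝ) (hσ : IsSignature W σ)
    (g : Fin n → Fin d → ℝ) (x0 : Fin n) (h0 : g x0 = 0)
    (hq : (fun p : Fin n × Fin d => g p.1 p.2) ⬝ᵥ (connLap W σ *ᵥ fun p => g p.1 p.2) = 0) :
    ∀ i, g i = 0 := by
  have henergy : ∑ i, ∑ j, W i j * (∑ a, (g i a - (σ i j *ᵥ g j) a) ^ 2) = 0 := by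
    have := energy_eq W hW σ hσ g
    rw [hq] at this
    linarith
  have hterm : ∀ i j, W i j * (∑ a, (g i a - (σ i j *ᵥ g j) a) ^ 2) = 0 := by
    have houter := (Finset.sum_eq_zero_iff_of_nonneg (fun i _ =>
      Finset.sum_nonneg fun j _ => mul_nonneg (hW.2.2 i j)
        (Finset.sum_nonneg fun a _ => sq_nonneg _))).1 henergy
    intro i j
    have hinner := (Finset.sum_eq_zero_iff_of_nonneg (fun j _ =>
      mul_nonneg (hW.2.2 i j) (Finset.sum_nonneg fun a _ => sq_nonneg _))).1
      (houter i (Finset.mem_univ i))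
    exact hinner j (Finset.mem_univ j)
  have hg : ∀ i j, 0 < W i j → g i = σ i j *ᵥ g j := by
    intro i j hpos
    have hsum : ∑ a, (g i a - (σ i j *ᵥ g j) a) ^ 2 = 0 := by
      have := hterm i j
      rcases mul_eq_zero.1 this with h | h
      · exact absurd h (ne_of_gt hpos)
      · exact h
    funext a
    have := (Finset.sum_eq_zero_iff_of_nonneg (fun a _ => sq_nonneg _)).1 hsum a
      (Finset.mem_univ a)
    have := pow_eq_zero_iff (n := 2) (by norm_num) |>.1 this
    linarith [this]
  intro i
  obtain ⟨p⟩ := hconn.preconnected x0 i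
  exact propagate W hW σ hσ g hg p h0

private lemma connLap_symm_entry {n d : ℕ} (W : Matrix (Fin n) (Fin n) ℝ) (hW : IsWeight W)
    (σ : Fin n → Fin n → Matrix (Fin d) (Fin d) ℝ) (hσ : IsSignature W σ)
    (p q : Fin n × Fin d) : connLap W σ q p = connLap W σ p q := by
  unfold connLap
  simp only [Matrix.of_apply]
  congr 1
  · by_cases h : p = q
    · subst h; rfl
    · rw [if_neg h, if_neg (Ne.symm h)]
  · rcases (hW.2.2 p.1 q.1).eq_or_lt with h | h
    · rw [hW.1.apply p.1 q.1, ← h]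
      simp
    · rw [hσ.2 p.1 q.1 h, hW.1.apply p.1 q.1]
      rfl

theorem stmt_8 {n d : ℕ} (hd : 1 ≤ d) (W : Matrix (Fin n) (Fin n) ℝ)
    (hW : IsWeight W) (hconn : (graphOf W).Connected)
    (σ : Fin n → Fin n → Matrix (Fin d) (Fin d) ℝ) (hσ : IsSignature W σ) :
    (∀ H : Set (Fin n), H.Nonempty → H ≠ Set.univ →
      ∀ φ : Fin n → Matrix (Fin d) (Fin d) ℝ,
      ∀ u v : Fin n → Matrix (Fin d) (Fin d) ℝ,
        (∀ x ∈ vertexBoundary W H, u x = φ x) →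
        (∀ x ∈ H, lapApply W σ u x = 0) →
        (∀ x, x ∉ H ∪ vertexBoundary W H → u x = 0) →
        (∀ x ∈ vertexBoundary W H, v x = φ x) →
        (∀ x ∈ H, lapApply W σ v x = 0) →
        (∀ x, x ∉ H ∪ vertexBoundary W H → v x = 0) →
        u = v) ∧
    (∀ j : Fin n, (minorC W σ j).PosDef) := by
  classical
  constructor
  · -- uniqueness of the Dirichlet problem
    intro H _ Hproper φ u v hu1 hu2 hu3 hv1 hv2 hv3
    set f : Fin n → Matrix (Fin d) (Fin d) ℝ := fun i => u i - v i with hf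
    have hfB : ∀ x, x ∉ H → f x = 0 := by
      intro x hx
      by_cases hb : x ∈ vertexBoundary W H
      · simp [hf, hu1 x hb, hv1 x hb]
      · have hx' : x ∉ H ∪ vertexBoundary W H := by
          intro hmem
          rcases hmem with h | h
          · exact hx h
          · exact hb h
        simp [hf, hu3 x hx', hv3 x hx']
    have hfL : ∀ x ∈ H, lapApply W σ f x = 0 := by
      intro x hx
      have : lapApply W σ f x = lapApply W σ u x - lapApply W σ v x := by
        unfold lapApply
        rw [← Finset.sum_sub_distrib]
        refine Finset.sum_congr rfl fun j _ => ?_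
        rw [← smul_sub]
        congr 1
        simp only [hf, Matrix.mul_sub]
        abel
      rw [this, hu2 x hx, hv2 x hx, sub_zero]
    -- columnwise analysis
    have hcol : ∀ c : Fin d, ∀ i, (fun a => f i a c) = 0 := by
      intro c
      set g : Fin n → Fin d → ℝ := fun i a => f i a c with hg
      have hgB : ∀ x, x ∉ H → g x = 0 := by
        intro x hx
        funext a
        rw [hg]
        simp [hfB x hx]
      have hmv : ∀ x ∈ H, ∀ a : Fin d,
          (connLap W σ *ᵥ fun p => g p.1 p.2) (x, a) = 0 := by
        intro x hx a
        rw [connLap_mulVec]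
        have := hfL x hx
        have hentry : (lapApply W σ f x) a c = 0 := by rw [this]; rfl
        rw [← hentry]
        unfold lapApply
        rw [Matrix.sum_apply]
        refine Finset.sum_congr rfl fun j _ => ?_
        simp only [Matrix.smul_apply, Matrix.sub_apply, smul_eq_mul]
        congr 1
      have hq : (fun p : Fin n × Fin d => g p.1 p.2) ⬝ᵥ
          (connLap W σ *ᵥ fun p => g p.1 p.2) = 0 := by
        rw [dotProduct]
        refine Finset.sum_eq_zero fun p _ => ?_
        by_cases hp : p.1 ∈ H
        · have := hmv p.1 hp p.2
          rw [show ((p.1 : Fin n), p.2) = p from rfl] at this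
          rw [this, mul_zero]
        · have : g p.1 = 0 := hgB p.1 hp
          rw [this]
          simp
      obtain ⟨x0, hx0⟩ := (Set.ne_univ_iff_exists_notMem H).1 Hproper
      have h0 : g x0 = 0 := hgB x0 hx0
      exact key W hW hconn σ hσ g x0 h0 hq
    have hfzero : ∀ i, f i = 0 := by
      intro i
      ext a c
      have := congrFun (hcol c i) a
      simpa using this
    funext i
    have := hfzero i
    rw [hf] at this
    have := sub_eq_zero.1 (by simpa using this)
    exact this
  · -- positive definiteness of the minor
    intro j
    rw [Matrix.posDef_iff_dotProduct_mulVec]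
    constructor
    · -- Hermitian
      ext p q
      simp only [Matrix.conjTranspose_apply, minorC, Matrix.submatrix_apply, star_trivial]
      exact connLap_symm_entry W hW σ hσ _ _
    · intro x hx
      set g : Fin n → Fin d → ℝ := fun k a => if h : k = j then 0 else x (⟨k, h⟩, a) with hg
      have hgj : g j = 0 := funext fun a => dif_pos rfl
      have hgk : ∀ (k : {k : Fin n // k ≠ j}) (a : Fin d), g (k : Fin n) a = x (k, a) := by
        rintro ⟨k, hk⟩ a
        exact dif_neg hk
      set gv : Fin n × Fin d → ℝ := fun p => g p.1 p.2 with hgv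
      have hmv : ∀ (k : {k : Fin n // k ≠ j}) (a : Fin d),
          (connLap W σ *ᵥ gv) ((k : Fin n), a) = (minorC W σ j *ᵥ x) (k, a) := by
        intro k a
        rw [Matrix.mulVec, Matrix.mulVec, dotProduct, dotProduct,
          Fintype.sum_prod_type, Fintype.sum_prod_type,
          sum_split j (fun l => ∑ b, connLap W σ ((k : Fin n), a) (l, b) * gv (l, b))]
        have hzero : ∑ b, connLap W σ ((k : Fin n), a) (j, b) * gv (j, b) = 0 := by
          refine Finset.sum_eq_zero fun b _ => ?_
          have : gv (j, b) = 0 := by rw [hgv]; simp [hgj]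
          rw [this, mul_zero]
        rw [hzero, zero_add]
        refine Finset.sum_congr rfl fun l _ => Finset.sum_congr rfl fun b _ => ?_
        rw [minorC, Matrix.submatrix_apply]
        congr 1
        rw [hgv]
        exact hgk l b
      have hquad : star x ⬝ᵥ (minorC W σ j *ᵥ x) = gv ⬝ᵥ (connLap W σ *ᵥ gv) := by
        rw [star_trivial, dotProduct, dotProduct,
          Fintype.sum_prod_type, Fintype.sum_prod_type,
          sum_split j (fun l => ∑ b, gv (l, b) * (connLap W σ *ᵥ gv) (l, b))]
        have hzero : ∑ b, gv (j, b) * (connLap W σ *ᵥ gv) (j, b) = 0 := by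
          refine Finset.sum_eq_zero fun b _ => ?_
          have : gv (j, b) = 0 := by rw [hgv]; simp [hgj]
          rw [this, zero_mul]
        rw [hzero, zero_add]
        refine (Finset.sum_congr rfl fun l _ => Finset.sum_congr rfl fun b _ => ?_).symm
        rw [hmv l b, hgv]
        congr 1
        exact hgk l b
      rw [hquad]
      rcases (quad_nonneg W hW σ hσ g).lt_or_eq with h | h
      · exact h
      · exfalso
        have hall := key W hW hconn σ hσ g j hgj h.symm
        apply hx
        funext p
        have : x p = g (p.1 : Fin n) p.2 := (hgk p.1 p.2).symm
        rw [show p = (p.1, p.2) from rfl, this, hall]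
        rfl
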